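/- arXiv:1204.3128 — 8 statements merged into one kernel-verified Lean document; each statement's English description precedes it below -/
import Mathlib

section
/- Let k be an algebraically closed field, n ≥ 2, and I an ideal of k[x₁,...,xₙ] such that I ∩ k[x₁] = ⟨p⟩ for some nonconstant polynomial p ∈ k[x₁]. Then there exists a ∈ k with p(a) = 0 such that ev_a(I) ≠ k[x₂,...,xₙ] (the image ideal is proper). -/
open MvPolynomial

/-- The evaluation homomorphism `ev_a : k[x₁,…,xₙ] → k[x₂,…,xₙ]`, `x₁ ↦ a`,
`xᵢ ↦ xᵢ₋₁` for `i ≥ 2`. -/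
noncomputable def evalAt {k : Type*} [CommSemiring k] {n : ℕ} (a : k) :
    MvPolynomial (Fin (n + 1)) k →ₐ[k] MvPolynomial (Fin n) k :=
  aeval (Fin.cases (C a) X)

/-- The canonical embedding `k[x₁] → k[x₁,…,xₙ]`. -/
noncomputable def univEmb (k : Type*) [CommSemiring k] (n : ℕ) :
    Polynomial k →ₐ[k] MvPolynomial (Fin (n + 1)) k :=
  Polynomial.aeval (X 0)

/-!
If `ev_a(I) = ⊤` for every root `a` of `p`, then `I` is comaximal with each kernel
`ker ev_a = ⟨x₁ - a⟩`, hence with their product over the roots of `p` counted with multiplicity.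
As `k` is algebraically closed, that product is `⟨p⟩` (extended to `k[x₁,…,xₙ]`), which lies in `I`.
So `I = ⊤`, whence `⟨p⟩ = I ∩ k[x₁] = ⊤`, impossible for nonconstant `p`.
-/

theorem Polynomial.dvd_prod_multiset_X_sub_C_roots {k : Type*} [Field k] {p : Polynomial k}
    (hsplit : p.Splits) (hp : p ≠ 0) : p ∣ (p.roots.map (Polynomial.X - Polynomial.C ·)).prod := by
  nth_rewrite 1 [hsplit.eq_prod_roots]
  exact (Polynomial.isUnit_C.mpr (Polynomial.leadingCoeff_ne_zero.mpr hp).isUnit).mul_left_dvd.mpr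
    dvd_rfl

namespace MvPolynomial

theorem evalAt_surjective {k : Type*} [CommSemiring k] {n : ℕ} (a : k) :
    Function.Surjective (evalAt (n := n) a) := fun g =>
  ⟨rename Fin.succ g, by rw [evalAt, aeval_rename]; exact aeval_X_left_apply g⟩

variable {k : Type*} [CommRing k] {n : ℕ}

theorem evalAt_eq_aeval_comp_finSuccEquiv (a : k) :
    evalAt (n := n) a =
      ((Polynomial.aeval (C a)).restrictScalars k).comp (finSuccEquiv k n).toAlgHom :=
  algHom_ext fun i => by
    cases i using Fin.cases <;> simp [evalAt, finSuccEquiv_X_zero, finSuccEquiv_X_succ]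

theorem ker_evalAt (a : k) :
    RingHom.ker (evalAt (n := n) a) = Ideal.span {X 0 - C a} := by
  have hker : RingHom.ker (evalAt (n := n) a) =
      (RingHom.ker (Polynomial.evalRingHom (C a))).comap (finSuccEquiv k n) := by
    ext f
    simp [RingHom.mem_ker, evalAt_eq_aeval_comp_finSuccEquiv]
  rw [hker, Polynomial.ker_evalRingHom]
  change Ideal.comap (finSuccEquiv k n).toRingEquiv _ = _
  rw [← Ideal.map_symm, Ideal.map_span, Set.image_singleton]
  congr 2
  rw [RingEquiv.symm_apply_eq]
  simp [finSuccEquiv_apply]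

theorem map_evalAt_eq_top_iff (a : k) (I : Ideal (MvPolynomial (Fin (n + 1)) k)) :
    I.map (evalAt a) = ⊤ ↔ I ⊔ Ideal.span {X 0 - C a} = ⊤ := by
  rw [← Ideal.comap_eq_top_iff (f := evalAt a),
    Ideal.comap_map_of_surjective' _ (evalAt_surjective a), ker_evalAt]

theorem univEmb_multiset_prod_X_sub_C (s : Multiset k) :
    univEmb k n (s.map (Polynomial.X - Polynomial.C ·)).prod = (s.map (X 0 - C ·)).prod := by
  simp [univEmb, map_multiset_prod, Multiset.map_map]

end MvPolynomial

/-- Lemma 1: if `k` is algebraically closed and `I ∩ k[x₁] = ⟨p⟩` with `p` nonconstant,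
then there is a root `a` of `p` with `ev_a(I)` a proper ideal of `k[x₂,…,xₙ]`.
(Here the ambient ring has `n + 2 ≥ 2` variables.) -/
theorem lemma_base1 {k : Type*} [Field k] [IsAlgClosed k] (n : ℕ)
    (I : Ideal (MvPolynomial (Fin (n + 2)) k)) (p : Polynomial k)
    (hp : 0 < p.degree)
    (hI : Ideal.comap (univEmb k (n + 1)) I = Ideal.span {p}) :
    ∃ a : k, p.eval a = 0 ∧ Ideal.map (evalAt a) I ≠ ⊤ := by
  by_contra! hcon
  set linearFactors : Multiset (MvPolynomial (Fin (n + 2)) k) := p.roots.map (X 0 - C ·)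
  have hcoprime : ∀ J ∈ linearFactors.map (Ideal.span {·}), I ⊔ J = ⊤ := by
    simp only [linearFactors, Multiset.map_map, Function.comp_apply, Multiset.mem_map]
    rintro _ ⟨a, ha, rfl⟩
    exact (map_evalAt_eq_top_iff a I).mp (hcon a (Polynomial.isRoot_of_mem_roots ha))
  have hprod_le : (linearFactors.map (Ideal.span {·})).prod ≤ I := by
    rw [Ideal.multiset_prod_span_singleton, Ideal.span_singleton_le_iff_mem,
      ← univEmb_multiset_prod_X_sub_C, ← Ideal.mem_comap, hI, Ideal.mem_span_singleton]
    exact Polynomial.dvd_prod_multiset_X_sub_C_roots (IsAlgClosed.splits p)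
      (Polynomial.ne_zero_of_degree_gt hp)
  have hI_top : I = ⊤ :=
    (sup_eq_left.mpr hprod_le).symm.trans (Ideal.sup_multiset_prod_eq_top hcoprime)
  rw [hI_top, Ideal.comap_top, eq_comm, Ideal.span_singleton_eq_top] at hI
  exact Polynomial.not_isUnit_of_degree_pos p hp hI
end

section
/- Let k be a field, n ≥ 2, and I an ideal of k[x₁,...,xₙ] such that I ∩ k[x₁] = {0}. Then there exists a nonzero polynomial q ∈ k[x₁] such that for every a ∈ k with q(a) ≠ 0, the image ideal ev_a(I) is a proper ideal of k[x₂,...,xₙ]. -/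
/-!
Pass to the fraction field `K` of `R = k[x₁]`: since `I ∩ R = 0`, the extension of `I` to
`K[x₂,…,xₙ]` is proper, so it lies in a maximal ideal `𝔪`, and by Zariski's lemma
`L = K[x₂,…,xₙ]/𝔪` is a finite extension of `K`. Clearing the denominators of integral equations
of the images of the finitely many variables gives `q ≠ 0` such that the image of `k[x₁,…,xₙ]`
in `L` is integral over `R[1/q]`. For every prime `𝔭` of `R` avoiding `q`, lying over for this
integral extension shows that `I + 𝔭 k[x₁,…,xₙ]` is proper; for `𝔭 = (x₁ - a)` this is `ev_a(I) ≠ ⊤`.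
-/

open MvPolynomial

namespace AlgHom

variable {R S L : Type*} [CommRing R] [CommRing S] [CommRing L] [Algebra R S] [Algebra R L]

theorem ker_sup_map_algebraMap_ne_top_of_isIntegral {A : Type*} [CommRing A] [Algebra R A]
    [Algebra A L] [IsScalarTower R A L] (hA : Function.Injective (algebraMap A L))
    (f : S →ₐ[R] L) (hf : ∀ s, IsIntegral A (f s)) {𝔭 : Ideal R}
    (h𝔭 : 𝔭.map (algebraMap R A) ≠ ⊤) :
    RingHom.ker f ⊔ 𝔭.map (algebraMap R S) ≠ ⊤ := by
  let g : S →+* integralClosure A L := (f : S →+* L).codRestrict _ hf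
  have hg : g.comp (algebraMap R S) =
      (algebraMap A (integralClosure A L)).comp (algebraMap R A) := by
    ext r
    exact (f.commutes r).trans (IsScalarTower.algebraMap_apply R A L r)
  have hker : RingHom.ker (algebraMap A (integralClosure A L)) ≤ 𝔭.map (algebraMap R A) := by
    rw [(RingHom.injective_iff_ker_eq_bot _).mp fun x y h => hA (congrArg Subtype.val h)]
    exact bot_le
  intro h
  have h𝔭C : (𝔭.map (algebraMap R A)).map (algebraMap A (integralClosure A L)) = ⊤ := by
    rw [Ideal.map_map, ← hg, ← Ideal.map_map, ← Ideal.map_top g, ← h, Ideal.map_sup,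
      (Ideal.map_eq_bot_iff_le_ker (I := RingHom.ker f) g).mpr fun s hs => Subtype.ext hs,
      bot_sup_eq]
  exact h𝔭 ((Ideal.map_eq_top_iff_of_ker_le _ hker fun x => integralClosure.isIntegral x).mp h𝔭C)

theorem exists_ne_zero_forall_ker_sup_map_algebraMap_ne_top [NoZeroDivisors R]
    [Algebra.FiniteType R S] {L : Type*} [Field L] [Algebra R L] [FaithfulSMul R L]
    [Algebra.IsAlgebraic R L] (f : S →ₐ[R] L) :
    ∃ q ≠ (0 : R), ∀ 𝔭 : Ideal R, 𝔭.IsPrime → q ∉ 𝔭 →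
      RingHom.ker f ⊔ 𝔭.map (algebraMap R S) ≠ ⊤ := by
  classical
  obtain ⟨s, hs⟩ := Algebra.FiniteType.out (R := R) (A := S)
  obtain ⟨q, hq0, hq⟩ := Algebra.IsAlgebraic.exists_integral_multiples R (s.image f)
  refine ⟨q, hq0, fun 𝔭 h𝔭 hq𝔭 => ?_⟩
  let A := Localization.Away q
  have hqL : IsUnit (algebraMap R L q) :=
    ((map_ne_zero_iff _ (FaithfulSMul.algebraMap_injective R L)).mpr hq0).isUnit
  let : Algebra A L := (IsLocalization.Away.lift q hqL).toAlgebra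
  have : IsScalarTower R A L :=
    IsScalarTower.of_algebraMap_eq fun r => (IsLocalization.Away.lift_eq q hqL r).symm
  have hAL : Function.Injective (algebraMap A L) := by
    refine (IsLocalization.lift_injective_iff _).mpr fun x y => ?_
    rw [(IsLocalization.injective A (powers_le_nonZeroDivisors_of_noZeroDivisors hq0)).eq_iff,
      (FaithfulSMul.algebraMap_injective R L).eq_iff]
  have hgen : ∀ x ∈ s, IsIntegral A (f x) := by
    intro x hx
    -- `f x = q⁻¹ * (q • f x)`, and `q` is invertible in `A`
    refine IsIntegral.of_mul_unit (y := algebraMap R L q)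
      (r := IsLocalization.Away.invSelf q) ?_ ?_
    · rw [IsScalarTower.algebraMap_apply R A L, ← map_mul, mul_comm,
        IsLocalization.Away.mul_invSelf, map_one]
    · rw [mul_comm, ← Algebra.smul_def]
      exact (hq _ (Finset.mem_image_of_mem f hx)).tower_top
  have hint : ∀ x, IsIntegral A (f x) := by
    have : Algebra.adjoin R (f '' s) ≤ (integralClosure A L).restrictScalars R :=
      Algebra.adjoin_le (by rintro _ ⟨x, hx, rfl⟩; exact hgen x hx)
    intro x
    apply this
    rw [← AlgHom.map_adjoin, hs]
    exact ⟨x, trivial, rfl⟩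
  refine ker_sup_map_algebraMap_ne_top_of_isIntegral hAL f hint
    ((IsLocalization.map_algebraMap_ne_top_iff_disjoint (Submonoid.powers q) A 𝔭).mpr ?_)
  rw [Set.disjoint_left]
  rintro _ ⟨n, rfl⟩
  exact fun h => hq𝔭 (h𝔭.mem_of_pow_mem n h)

end AlgHom

namespace MvPolynomial

theorem map_ne_top_of_comap_C_eq_bot {R S σ : Type*} [CommRing R] [CommRing S] [Algebra R S]
    (M : Submonoid R) [IsLocalization M S] (hM : (0 : R) ∉ M)
    {J : Ideal (MvPolynomial σ R)} (hJ : J.comap C = ⊥) :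
    J.map (map (algebraMap R S)) ≠ ⊤ := by
  let := algebraMvPolynomial (σ := σ) (R := R) (S := S)
  rw [← algebraMap_def, IsLocalization.map_algebraMap_ne_top_iff_disjoint (M.map C),
    Set.disjoint_left]
  rintro _ ⟨m, hm, rfl⟩ hmJ
  have : m ∈ J.comap C := hmJ
  rw [hJ, Ideal.mem_bot] at this
  exact hM (this ▸ hm)

theorem exists_ne_zero_forall_sup_map_C_ne_top {R σ : Type*} [CommRing R] [IsDomain R]
    [Finite σ] {J : Ideal (MvPolynomial σ R)} (hJ : J.comap C = ⊥) :
    ∃ q ≠ (0 : R), ∀ 𝔭 : Ideal R, 𝔭.IsPrime → q ∉ 𝔭 → J ⊔ 𝔭.map C ≠ ⊤ := by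
  let K := FractionRing R
  obtain ⟨𝔪, h𝔪, hJ𝔪⟩ := Ideal.exists_le_maximal _
    (map_ne_top_of_comap_C_eq_bot (S := K) _ zero_notMem_nonZeroDivisors hJ)
  let L := MvPolynomial σ K ⧸ 𝔪
  let : Field L := Ideal.Quotient.field 𝔪
  have : Module.Finite K L := finite_of_finite_type_of_isJacobsonRing K L
  have : Algebra.IsAlgebraic R K := IsLocalization.isAlgebraic K (nonZeroDivisors R)
  have : Algebra.IsAlgebraic R L := .trans R K L
  have : FaithfulSMul R L := (faithfulSMul_iff_algebraMap_injective R L).mpr <| by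
    rw [IsScalarTower.algebraMap_eq R K L]
    exact (algebraMap K L).injective.comp (IsFractionRing.injective R K)
  let f : MvPolynomial σ R →ₐ[R] L :=
    (Ideal.Quotient.mkₐ R 𝔪).comp (mapAlgHom (Algebra.ofId R K))
  have hJf : J ≤ RingHom.ker f := fun x hx =>
    Ideal.Quotient.eq_zero_iff_mem.mpr (hJ𝔪 (Ideal.mem_map_of_mem _ hx))
  obtain ⟨q, hq0, hq⟩ := f.exists_ne_zero_forall_ker_sup_map_algebraMap_ne_top
  exact ⟨q, hq0, fun 𝔭 h𝔭 hq𝔭 => ne_top_of_le_ne_top (hq 𝔭 h𝔭 hq𝔭) (sup_le_sup_right hJf _)⟩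

variable (R : Type*) [CommSemiring R] (n : ℕ)

noncomputable def finSuccEquivRight :
    MvPolynomial (Fin (n + 1)) R ≃ₐ[R] MvPolynomial (Fin n) (Polynomial R) :=
  (renameEquiv R (_root_.finSuccEquiv n)).trans (optionEquivRight R (Fin n))

variable {R n}

@[simp]
theorem finSuccEquivRight_X_zero : finSuccEquivRight R n (X 0) = C Polynomial.X := by
  simp [finSuccEquivRight]

@[simp]
theorem finSuccEquivRight_X_succ (i : Fin n) : finSuccEquivRight R n (X i.succ) = X i := by
  simp [finSuccEquivRight]

@[simp]
theorem finSuccEquivRight_C (r : R) : finSuccEquivRight R n (C r) = C (Polynomial.C r) := by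
  simp [finSuccEquivRight]

end MvPolynomial

theorem finSuccEquivRight_symm_C {k : Type*} [CommSemiring k] (n : ℕ) (p : Polynomial k) :
    (finSuccEquivRight k n).symm (C p) = univEmb k n p := by
  have : (finSuccEquivRight k n).symm.toAlgHom.comp
      (IsScalarTower.toAlgHom k (Polynomial k) (MvPolynomial (Fin n) (Polynomial k))) =
      univEmb k n :=
    Polynomial.algHom_ext (by simp [univEmb, AlgEquiv.symm_apply_eq])
  exact DFunLike.congr_fun this p

theorem map_evalRingHom_comp_finSuccEquivRight {k : Type*} [CommRing k] (n : ℕ) (a : k) :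
    (map (Polynomial.evalRingHom a)).comp ((finSuccEquivRight k n).toRingEquiv : _ →+* _) =
      (evalAt (n := n) a).toRingHom := by
  refine ringHom_ext (fun c => by simp [evalAt]) fun i => ?_
  refine Fin.cases ?_ (fun j => ?_) i <;> simp [evalAt]

/-- Lemma 2: if `I ∩ k[x₁] = {0}` then there is a nonzero `q ∈ k[x₁]` such that
for every `a` with `q(a) ≠ 0`, the ideal `ev_a(I)` of `k[x₂,…,xₙ]` is proper.
(Here the ambient ring has `n + 2 ≥ 2` variables.) -/
theorem lemma_base2 {k : Type*} [Field k] (n : ℕ)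
    (I : Ideal (MvPolynomial (Fin (n + 2)) k))
    (hI : Ideal.comap (univEmb k (n + 1)) I = ⊥) :
    ∃ q : Polynomial k, q ≠ 0 ∧
      ∀ a : k, q.eval a ≠ 0 → Ideal.map (evalAt a) I ≠ ⊤ := by
  let e := (finSuccEquivRight k (n + 1)).toRingEquiv
  have hJ : (I.map (e : _ →+* MvPolynomial (Fin (n + 1)) (Polynomial k))).comap C = ⊥ := by
    rw [← hI, Ideal.map_comap_of_equiv]
    ext p
    exact Iff.of_eq (congrArg (· ∈ I) (finSuccEquivRight_symm_C (n + 1) p))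
  obtain ⟨q, hq0, hq⟩ := exists_ne_zero_forall_sup_map_C_ne_top hJ
  refine ⟨q, hq0, fun a ha htop => hq _ (RingHom.ker_isPrime (Polynomial.evalRingHom a)) ha ?_⟩
  rw [← ker_map, ← Ideal.comap_map_of_surjective' (map (Polynomial.evalRingHom a))
      (map_surjective _ fun c => ⟨Polynomial.C c, Polynomial.eval_C⟩), Ideal.map_map,
    map_evalRingHom_comp_finSuccEquivRight]
  exact (congrArg _ htop).trans Ideal.comap_top
end

section
/- Let k be a field, n ≥ 1, a₁,...,a_m ∈ k pairwise distinct, c₁,...,c_m positive integers, and G = {g₁,...,g_r} a finite subset of k[x₁,...,xₙ]. Then the ideal of k[x₁,...,xₙ] generated by {∏_{j=1}^m (x₁ − a_j)^{c_j}} ∪ G equals the intersection over j = 1,...,m of the ideals generated by {(x₁ − a_j)^{c_j}} ∪ G. -/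
/-! Distinct linear forms `x₁ - aⱼ` are pairwise coprime, hence so are their powers, so the
principal ideal of the product is the intersection of the principal ideals of the factors.
Adding the ideal `⟨G⟩` commutes with intersections of pairwise comaximal ideals: for comaximal
`I, I'` the ideals `I + J` and `I' + J` are again comaximal, so their intersection is their
product, which lies in `I I' + J`. -/

open MvPolynomial

namespace Ideal

variable {R : Type*} [CommRing R]

theorem inf_sup_eq_of_isCoprime {I I' : Ideal R} (J : Ideal R) (h : IsCoprime I I') :
    (I ⊓ I') ⊔ J = (I ⊔ J) ⊓ (I' ⊔ J) := by
  refine le_antisymm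
    (le_inf (sup_le_sup_right inf_le_left _) (sup_le_sup_right inf_le_right _)) ?_
  have hIJ : IsCoprime (I ⊔ J) (I' ⊔ J) :=
    isCoprime_iff_sup_eq.mpr (eq_top_iff.mpr (h.sup_eq ▸ sup_le_sup le_sup_left le_sup_left))
  rw [← mul_eq_inf_of_isCoprime hIJ, sup_mul, mul_sup, mul_sup]
  refine sup_le (sup_le ?_ ?_) (sup_le ?_ ?_)
  · exact le_sup_of_le_left mul_le_inf
  · exact le_sup_of_le_right mul_le_right
  · exact le_sup_of_le_right mul_le_left
  · exact le_sup_of_le_right mul_le_right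

open Function in
theorem biInf_sup_eq_of_pairwise_isCoprime {ι : Type*} {s : Finset ι} {I : ι → Ideal R}
    (J : Ideal R) (hI : (s : Set ι).Pairwise (IsCoprime on I)) :
    (⨅ i ∈ s, I i) ⊔ J = ⨅ i ∈ s, (I i ⊔ J) := by
  classical
  induction s using Finset.induction_on with
  | empty => simp
  | insert b s hb ih =>
    rw [Finset.coe_insert, Set.pairwise_insert_of_notMem hb] at hI
    have hcop : IsCoprime (I b) (⨅ i ∈ s, I i) :=
      isCoprime_biInf fun i hi => (hI.2 i hi).1
    rw [Finset.iInf_insert, Finset.iInf_insert, inf_sup_eq_of_isCoprime J hcop, ih hI.1]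

end Ideal

theorem MvPolynomial.isCoprime_X_sub_C_of_isUnit_sub {R σ : Type*} [CommRing R] (i : σ)
    {a b : R} (h : IsUnit (a - b)) : IsCoprime (X i - C a) (X i - C b : MvPolynomial σ R) := by
  have hmap := (Polynomial.isCoprime_X_sub_C_of_isUnit_sub h).map
    (Polynomial.aeval (R := R) (X i : MvPolynomial σ R)).toRingHom
  simpa only [AlgHom.toRingHom_eq_coe, RingHom.coe_coe, map_sub, Polynomial.aeval_X,
    Polynomial.aeval_C, MvPolynomial.algebraMap_eq] using hmap

theorem span_prod_eq_iInf_general {k : Type*} [Field k] (n m : ℕ)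
    (a : Fin m → k) (ha : Function.Injective a)
    (c : Fin m → ℕ)
    (G : Finset (MvPolynomial (Fin (n + 1)) k)) :
    Ideal.span (insert (∏ j, (X 0 - C (a j)) ^ c j)
        (G : Set (MvPolynomial (Fin (n + 1)) k))) =
      ⨅ j : Fin m, Ideal.span (insert ((X 0 - C (a j)) ^ c j)
        (G : Set (MvPolynomial (Fin (n + 1)) k))) := by
  have hcop : ∀ i j, i ≠ j → IsCoprime ((X 0 - C (a i)) ^ c i)
      ((X 0 - C (a j)) ^ c j : MvPolynomial (Fin (n + 1)) k) := fun i j hij =>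
    (isCoprime_X_sub_C_of_isUnit_sub 0 (sub_ne_zero.mpr (ha.ne hij)).isUnit).pow
  simp only [Ideal.span_insert]
  rw [← Ideal.iInf_span_singleton hcop]
  simpa using Ideal.biInf_sup_eq_of_pairwise_isCoprime (s := Finset.univ) (Ideal.span ↑G)
    fun i _ j _ hij => (Ideal.isCoprime_span_singleton_iff _ _).mpr (hcop i j hij)

/-- Equation (1): for pairwise distinct `a₁,…,a_m ∈ k`, positive exponents `c₁,…,c_m`, and a
finite set `G ⊆ k[x₁,…,xₙ]` (here `n + 1 ≥ 1` variables),
`⟨∏ⱼ (x₁ - aⱼ)^{cⱼ}, G⟩ = ⋂ⱼ ⟨(x₁ - aⱼ)^{cⱼ}, G⟩`. -/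
theorem span_prod_eq_iInf {k : Type*} [Field k] (n m : ℕ)
    (a : Fin m → k) (ha : Function.Injective a)
    (c : Fin m → ℕ) (hc : ∀ j, 0 < c j)
    (G : Finset (MvPolynomial (Fin (n + 1)) k)) :
    Ideal.span (insert (∏ j, (X 0 - C (a j)) ^ c j)
        (G : Set (MvPolynomial (Fin (n + 1)) k))) =
      ⨅ j : Fin m, Ideal.span (insert ((X 0 - C (a j)) ^ c j)
        (G : Set (MvPolynomial (Fin (n + 1)) k))) :=
  span_prod_eq_iInf_general n m a ha c G
end

section
/- Let k be an algebraically closed field, n ≥ 1, f ∈ k[x₁] a nonzero polynomial, and G a finite subset of k[x₁,...,xₙ]. If the ideal of k[x₁,...,xₙ] generated by {f} ∪ G is proper, then there exists a ∈ k with f(a) = 0 such that the ideal generated by {x₁ − a} ∪ G is proper. -/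
/-!
A proper ideal lies in a maximal ideal, which by the Nullstellensatz is the ideal of a point
`x ∈ kⁿ`. That point is a common zero of `f` (viewed in `x₁`) and of `G`, so `a := x₁(x)` is a
root of `f`, and `x` is also a common zero of `x₁ - a` and `G`, which forces `⟨x₁ - a, G⟩` to be
proper.
-/

open MvPolynomial

namespace MvPolynomial

theorem zeroLocus_nonempty_of_ne_top {k σ : Type*} [Field k] [IsAlgClosed k] [Finite σ]
    {I : Ideal (MvPolynomial σ k)} (hI : I ≠ ⊤) : (zeroLocus k I).Nonempty := by
  obtain ⟨m, hm, hIm⟩ := Ideal.exists_le_maximal I hI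
  obtain ⟨x, rfl⟩ := isMaximal_iff_eq_vanishingIdeal_singleton.1 hm
  exact ⟨x, zeroLocus_anti_mono hIm (zeroLocus_vanishingIdeal_le _ rfl)⟩

theorem ne_top_of_zeroLocus_nonempty {k K σ : Type*} [Field k] [Field K] [Algebra k K]
    {I : Ideal (MvPolynomial σ k)} (hI : (zeroLocus K I).Nonempty) : I ≠ ⊤ := by
  rintro rfl
  simp at hI

end MvPolynomial

theorem aeval_univEmb {k : Type*} [CommSemiring k] {n : ℕ} (x : Fin (n + 1) → k)
    (f : Polynomial k) : aeval x (univEmb k n f) = f.eval (x 0) := by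
  rw [univEmb, ← Polynomial.aeval_algHom_apply, aeval_X, Polynomial.coe_aeval_eq_eval]

theorem exists_root_span_proper_general {k : Type*} [Field k] [IsAlgClosed k] (n : ℕ)
    (f : Polynomial k)
    (G : Finset (MvPolynomial (Fin (n + 1)) k))
    (hI : Ideal.span (insert (univEmb k n f) (G : Set (MvPolynomial (Fin (n + 1)) k))) ≠ ⊤) :
    ∃ a : k, f.eval a = 0 ∧
      Ideal.span (insert (X 0 - C a) (G : Set (MvPolynomial (Fin (n + 1)) k))) ≠ ⊤ := by
  obtain ⟨x, hx⟩ := zeroLocus_nonempty_of_ne_top hI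
  rw [zeroLocus_span, Set.mem_ofPred_eq, Set.forall_mem_insert, aeval_univEmb] at hx
  refine ⟨x 0, hx.1, ne_top_of_zeroLocus_nonempty ⟨x, ?_⟩⟩
  rw [zeroLocus_span, Set.mem_ofPred_eq, Set.forall_mem_insert]
  exact ⟨by simp, hx.2⟩

/-- Corollary: over an algebraically closed field, if `f ∈ k[x₁]` is nonzero, `G` finite,
and `⟨f, G⟩` is a proper ideal of `k[x₁,…,xₙ]` (here `n + 1 ≥ 1` variables), then there is a
root `a` of `f` with `⟨x₁ - a, G⟩` proper. -/
theorem exists_root_span_proper {k : Type*} [Field k] [IsAlgClosed k] (n : ℕ)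
    (f : Polynomial k) (hf : f ≠ 0)
    (G : Finset (MvPolynomial (Fin (n + 1)) k))
    (hI : Ideal.span (insert (univEmb k n f) (G : Set (MvPolynomial (Fin (n + 1)) k))) ≠ ⊤) :
    ∃ a : k, f.eval a = 0 ∧
      Ideal.span (insert (X 0 - C a) (G : Set (MvPolynomial (Fin (n + 1)) k))) ≠ ⊤ :=
  exists_root_span_proper_general n f G hI
end

section
/- Let R be a principal ideal domain, n ≥ 1, and fix a monomial order on R[x₁,...,xₙ]. Then every ideal I of R[x₁,...,xₙ] has a finite strong Gröbner basis: there exists a finite set Γ ⊆ I \ {0} such that for every nonzero f ∈ I there is g ∈ Γ whose leading monomial divides the leading monomial of f. -/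
open MvPolynomial

variable {R : Type*} [CommRing R] {σ : Type*}

/-- The leading exponent vector (leading term) of a polynomial with respect to a
monomial order: the largest exponent vector with nonzero coefficient. -/
noncomputable def mDegree (m : MonomialOrder σ) (f : MvPolynomial σ R) : σ →₀ ℕ :=
  m.toSyn.symm (f.support.sup fun d => m.toSyn d)

/-- The leading coefficient of a polynomial with respect to a monomial order. -/
noncomputable def mLeadingCoeff (m : MonomialOrder σ) (f : MvPolynomial σ R) : R :=
  f.coeff (mDegree m f)

/-- `Γ ⊆ I \ {0}` is a strong Gröbner basis of `I` when, for every nonzero `f ∈ I`,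
some `g ∈ Γ` has leading monomial `lm(g) = lc(g)·lt(g)` dividing `lm(f)`, i.e. the
leading coefficient of `g` divides that of `f` and the leading exponent vector of `g`
is componentwise `≤` that of `f`. -/
def IsStrongGroebnerBasis (m : MonomialOrder σ) (I : Ideal (MvPolynomial σ R))
    (Γ : Set (MvPolynomial σ R)) : Prop :=
  Γ ⊆ (I : Set (MvPolynomial σ R)) \ {0} ∧
    ∀ f ∈ I, f ≠ 0 → ∃ g ∈ Γ,
      mLeadingCoeff m g ∣ mLeadingCoeff m f ∧ mDegree m g ≤ mDegree m f

/-! By Hilbert's basis theorem the leading terms of `I` generate the same ideal as those of a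
finite `F ⊆ I`. For each `T ⊆ F`, shift the elements of `T` up to the least common multiple of
their leading terms and combine them with Bézout coefficients: this gives `g_T ∈ I` whose leading
coefficient generates the ideal of the leading coefficients of `T`. For `f ∈ I`, comparing
coefficients at `lt(f)` puts `lc(f)` in that ideal for `T = {p ∈ F | lt(p) ∣ lt(f)}`, so
`lm(g_T) ∣ lm(f)`. -/

theorem Submodule.exists_finset_subset_span_image_eq {R M α : Type*} [Semiring R]
    [AddCommMonoid M] [Module R M] [IsNoetherian R M] (v : α → M) (S : Set α) :
    ∃ F : Finset α, ↑F ⊆ S ∧ span R (v '' F) = span R (v '' S) := by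
  classical
  obtain ⟨t, htS, ht⟩ := (fg_span_iff_fg_span_finset_subset (R := R) (v '' S)).mp
    (IsNoetherian.noetherian _)
  obtain ⟨F, hFS, rfl⟩ := Finset.subset_set_image_iff.mp htS
  exact ⟨F, hFS, by rw [ht, Finset.coe_image]⟩

theorem isStrongGroebnerBasis_iff (m : MonomialOrder σ) {I : Ideal (MvPolynomial σ R)}
    {Γ : Set (MvPolynomial σ R)} :
    IsStrongGroebnerBasis m I Γ ↔ Γ ⊆ (I : Set (MvPolynomial σ R)) \ {0} ∧
      ∀ f ∈ I, f ≠ 0 → ∃ g ∈ Γ,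
        m.leadingCoeff g ∣ m.leadingCoeff f ∧ m.degree g ≤ m.degree f :=
  Iff.rfl

namespace MonomialOrder

variable {m : MonomialOrder σ}

theorem degree_eq_of_coeff_ne_zero {f : MvPolynomial σ R} {d : σ →₀ ℕ} (hd : f.coeff d ≠ 0)
    (hf : m.degree f ≼[m] d) : m.degree f = d :=
  m.toSyn.injective <| le_antisymm hf (m.le_degree (mem_support_iff.mpr hd))

theorem coeff_mem_span_leadingCoeff {B : Set (MvPolynomial σ R)} {p : MvPolynomial σ R}
    (hp : p ∈ Ideal.span (m.leadingTerm '' B)) (d : σ →₀ ℕ) :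
    p.coeff d ∈ Ideal.span (m.leadingCoeff '' {b ∈ B | m.degree b ≤ d}) := by
  classical
  induction hp using Submodule.span_induction generalizing d with
  | mem _ h =>
    obtain ⟨b, hb, rfl⟩ := h
    rw [leadingTerm, coeff_monomial]
    split_ifs with hbd
    · exact Ideal.subset_span ⟨b, ⟨hb, hbd.le⟩, rfl⟩
    · exact zero_mem _
  | zero => simp
  | add _ _ _ _ hx hy => rw [coeff_add]; exact add_mem (hx d) (hy d)
  | smul a x _ hx =>
    rw [smul_eq_mul, coeff_mul]
    refine Ideal.sum_mem _ fun ij hij => Ideal.mul_mem_left _ _ ?_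
    refine Ideal.span_mono (Set.image_mono ?_) (hx ij.2)
    exact fun b hb => ⟨hb.1, hb.2.trans (Finset.HasAntidiagonal.antidiagonal.snd_le hij)⟩

section Combination

variable {T : Finset (MvPolynomial σ R)} {D : σ →₀ ℕ} (u : MvPolynomial σ R → R)

theorem coeff_monomial_sub_degree_mul {p : MvPolynomial σ R} (hp : m.degree p ≤ D) (a : R) :
    (monomial (D - m.degree p) a * p).coeff D = a * m.leadingCoeff p := by
  rw [coeff_monomial_mul', if_pos tsub_le_self, tsub_tsub_cancel_of_le hp]
  rfl

theorem degree_monomial_sub_degree_mul_le {p : MvPolynomial σ R} (hp : m.degree p ≤ D) (a : R) :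
    m.degree (monomial (D - m.degree p) a * p) ≼[m] D :=
  calc m.toSyn (m.degree (monomial (D - m.degree p) a * p))
      _ ≤ m.toSyn (m.degree (monomial (D - m.degree p) a) + m.degree p) := degree_mul_le
      _ ≤ m.toSyn (D - m.degree p + m.degree p) := by
        rw [map_add, map_add]; grw [degree_monomial_le a]
      _ = m.toSyn D := by rw [tsub_add_cancel_of_le hp]

theorem degree_and_leadingCoeff_sum_monomial_mul (hD : ∀ p ∈ T, m.degree p ≤ D)
    (hu : ∑ p ∈ T, u p * m.leadingCoeff p ≠ 0) :
    m.degree (∑ p ∈ T, monomial (D - m.degree p) (u p) * p) = D ∧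
      m.leadingCoeff (∑ p ∈ T, monomial (D - m.degree p) (u p) * p) =
        ∑ p ∈ T, u p * m.leadingCoeff p := by
  have hcoeff : (∑ p ∈ T, monomial (D - m.degree p) (u p) * p).coeff D =
      ∑ p ∈ T, u p * m.leadingCoeff p := by
    rw [coeff_sum]
    exact Finset.sum_congr rfl fun p hp => coeff_monomial_sub_degree_mul (hD p hp) (u p)
  have hdeg : m.degree (∑ p ∈ T, monomial (D - m.degree p) (u p) * p) = D :=
    degree_eq_of_coeff_ne_zero (hcoeff ▸ hu) <| degree_sum_le.trans <|
      Finset.sup_le fun p hp => degree_monomial_sub_degree_mul_le (hD p hp) (u p)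
  exact ⟨hdeg, by rw [leadingCoeff, hdeg, hcoeff]⟩

end Combination

theorem exists_mem_span_leadingCoeff_eq_and_degree_le [IsBezout R]
    {I : Ideal (MvPolynomial σ R)} (T : Finset (MvPolynomial σ R))
    (hT : (T : Set (MvPolynomial σ R)) ⊆ I) :
    ∃ g ∈ I, Ideal.span {m.leadingCoeff g} = Ideal.span (m.leadingCoeff '' T) ∧
      m.degree g ≤ T.sup m.degree := by
  classical
  set J := Ideal.span (m.leadingCoeff '' (T : Set (MvPolynomial σ R)))
  have : J.IsPrincipal :=
    IsBezout.isPrincipal_of_FG J ⟨T.image m.leadingCoeff, by rw [Finset.coe_image]⟩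
  by_cases hγ : Submodule.IsPrincipal.generator J = 0
  · refine ⟨0, zero_mem I, ?_, by simp⟩
    rw [leadingCoeff_zero, ← hγ, Ideal.span_singleton_generator]
  obtain ⟨u, hu⟩ := (Submodule.mem_span_image_finset_iff_exists_fun' R).mp
    (Submodule.IsPrincipal.generator_mem J)
  simp only [smul_eq_mul] at hu
  obtain ⟨hdeg, hlc⟩ := degree_and_leadingCoeff_sum_monomial_mul u
    (fun p hp => Finset.le_sup (f := m.degree) hp) (hu ▸ hγ)
  refine ⟨_, Ideal.sum_mem _ fun p hp => Ideal.mul_mem_left _ _ (hT hp), ?_, hdeg.le⟩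
  rw [hlc, hu, Ideal.span_singleton_generator]

theorem exists_isStrongGroebnerBasis_of_leadingTerm_mem_span [IsBezout R]
    {I : Ideal (MvPolynomial σ R)} (F : Finset (MvPolynomial σ R))
    (hFI : (F : Set (MvPolynomial σ R)) ⊆ I)
    (hF : ∀ f ∈ I, m.leadingTerm f ∈ Ideal.span (m.leadingTerm '' F)) :
    ∃ Γ : Finset (MvPolynomial σ R), IsStrongGroebnerBasis m I Γ := by
  classical
  choose! g hgI hg using
    fun (T : Finset (MvPolynomial σ R)) (hT : (T : Set (MvPolynomial σ R)) ⊆ I) =>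
    exists_mem_span_leadingCoeff_eq_and_degree_le (m := m) T hT
  have hsubI : ∀ T ∈ F.powerset, (T : Set (MvPolynomial σ R)) ⊆ I := fun T hT =>
    (Finset.coe_subset.mpr (Finset.mem_powerset.mp hT)).trans hFI
  refine ⟨(F.powerset.image g).filter (· ≠ 0), (isStrongGroebnerBasis_iff m).mpr ⟨?_, ?_⟩⟩
  · intro p hp
    simp only [Finset.coe_filter, Finset.mem_image] at hp
    obtain ⟨⟨T, hT, rfl⟩, hT0⟩ := hp
    exact ⟨hgI T (hsubI T hT), hT0⟩
  intro f hfI hf0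
  set T := F.filter (m.degree · ≤ m.degree f)
  have hTF : T ∈ F.powerset := Finset.mem_powerset.mpr (Finset.filter_subset _ _)
  obtain ⟨hspan, hdeg⟩ := hg T (hsubI T hTF)
  have hdvd : m.leadingCoeff (g T) ∣ m.leadingCoeff f := by
    rw [← Ideal.mem_span_singleton, hspan, Finset.coe_filter]
    simpa [leadingTerm] using coeff_mem_span_leadingCoeff (hF f hfI) (m.degree f)
  have hgT0 : g T ≠ 0 := fun h =>
    hf0 (m.leadingCoeff_eq_zero_iff.mp (zero_dvd_iff.mp (by simpa [h] using hdvd)))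
  refine ⟨g T, Finset.mem_filter.mpr ⟨Finset.mem_image_of_mem g hTF, hgT0⟩, hdvd, ?_⟩
  exact hdeg.trans (Finset.sup_le fun p hp => (Finset.mem_filter.mp hp).2)

end MonomialOrder

theorem exists_finite_strong_groebner_basis_general
    {R : Type*} [CommRing R] [IsPrincipalIdealRing R]
    (n : ℕ) (m : MonomialOrder (Fin n))
    (I : Ideal (MvPolynomial (Fin n) R)) :
    ∃ Γ : Finset (MvPolynomial (Fin n) R),
      IsStrongGroebnerBasis m I (Γ : Set (MvPolynomial (Fin n) R)) := by
  obtain ⟨F, hFI, hF⟩ := Submodule.exists_finset_subset_span_image_eq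
    (R := MvPolynomial (Fin n) R) m.leadingTerm (I : Set (MvPolynomial (Fin n) R))
  refine m.exists_isStrongGroebnerBasis_of_leadingTerm_mem_span F hFI fun f hf => ?_
  rw [Ideal.span, hF]
  exact Ideal.subset_span ⟨f, hf, rfl⟩

/-- Over a PID `R`, every ideal of `R[x₁,…,xₙ]` (`n ≥ 1`) has a finite strong
Gröbner basis with respect to any monomial order. -/
theorem exists_finite_strong_groebner_basis
    {R : Type*} [CommRing R] [IsDomain R] [IsPrincipalIdealRing R]
    (n : ℕ) (hn : 1 ≤ n) (m : MonomialOrder (Fin n))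
    (I : Ideal (MvPolynomial (Fin n) R)) :
    ∃ Γ : Finset (MvPolynomial (Fin n) R),
      IsStrongGroebnerBasis m I (Γ : Set (MvPolynomial (Fin n) R)) :=
  exists_finite_strong_groebner_basis_general n m I
end

section
/- Let R₁ and R₂ be commutative rings, φ : R₁ → R₂ a surjective ring homomorphism, n ≥ 1, and fix a monomial order on n-variable polynomials. Let Γ be a strong Gröbner basis of an ideal I of R₁[x₁,...,xₙ], and suppose that for every g ∈ Γ the image φ(lc(g)) of its leading coefficient is neither 0 nor a zero divisor in R₂. Then φ(Γ) (the image of Γ under the coefficientwise extension of φ) is a strong Gröbner basis of the image ideal φ(I) in R₂[x₁,...,xₙ]. -/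
/-!
Every element of `φ(I)` is `φ(f)` for some `f ∈ I`; take one of least degree. Its leading
coefficient survives `φ`: otherwise pick `g ∈ Γ` with `lm(g) ∣ lm(f)`, say `lc(f) = lc(g)·c`. Since
`φ(lc g)` is not a zero divisor, `φ(c) = 0`, so `f - c·x^(lt f - lt g)·g` lies in `I`, has the same
image and smaller degree. Once `φ(lc f) ≠ 0`, the leading data of `f` and of `g` commute with `φ`,
and `lm(φ g) ∣ lm(φ f)` is the image of `lm(g) ∣ lm(f)`.
-/

open MvPolynomial

variable {R : Type*} [CommRing R] {σ : Type*}

theorem mDegree_eq_degree (m : MonomialOrder σ) (f : MvPolynomial σ R) :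
    mDegree m f = m.degree f :=
  rfl

theorem mLeadingCoeff_eq_leadingCoeff (m : MonomialOrder σ) (f : MvPolynomial σ R) :
    mLeadingCoeff m f = m.leadingCoeff f :=
  rfl

namespace MonomialOrder

variable {m : MonomialOrder σ}

section Map

variable {S T : Type*} [CommSemiring S] [CommSemiring T] {φ : S →+* T} {f : MvPolynomial σ S}

theorem degree_map_of_map_leadingCoeff_ne_zero (hf : φ (m.leadingCoeff f) ≠ 0) :
    m.degree (map φ f) = m.degree f := by
  refine m.toSyn.injective (le_antisymm
    (m.degree_le_iff.2 fun d hd => m.le_degree (support_map_subset φ f hd)) (m.le_degree ?_))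
  rwa [mem_support_iff, coeff_map]

theorem leadingCoeff_map_of_map_leadingCoeff_ne_zero (hf : φ (m.leadingCoeff f) ≠ 0) :
    m.leadingCoeff (map φ f) = φ (m.leadingCoeff f) := by
  rw [leadingCoeff, degree_map_of_map_leadingCoeff_ne_zero hf, coeff_map, leadingCoeff]

theorem map_ne_zero_of_map_leadingCoeff_ne_zero (hf : φ (m.leadingCoeff f) ≠ 0) :
    map φ f ≠ 0 := fun h0 => by
  rw [← leadingCoeff_map_of_map_leadingCoeff_ne_zero hf, h0, leadingCoeff_zero] at hf
  exact hf rfl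

end Map

variable {R₂ : Type*} [CommRing R₂]

theorem _root_.IsStrongGroebnerBasis.exists_leadingCoeff_dvd {I : Ideal (MvPolynomial σ R)}
    {Γ : Set (MvPolynomial σ R)} (hΓ : IsStrongGroebnerBasis m I Γ) {f : MvPolynomial σ R}
    (hf : f ∈ I) (hf0 : f ≠ 0) :
    ∃ g ∈ Γ, m.leadingCoeff g ∣ m.leadingCoeff f ∧ m.degree g ≤ m.degree f :=
  hΓ.2 f hf hf0

theorem toSyn_degree_lt_of_coeff_eq_zero {f : MvPolynomial σ R} {d : σ →₀ ℕ} (hf : f ≠ 0)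
    (hle : m.degree f ≼[m] d) (hd : f.coeff d = 0) : m.degree f ≺[m] d := by
  refine lt_of_le_of_ne hle fun heq => hf ?_
  rwa [← m.coeff_degree_eq_zero_iff, m.toSyn.injective heq]

theorem toSyn_degree_sub_monomial_mul_lt {f g : MvPolynomial σ R} {c : R}
    (hc : m.leadingCoeff f = m.leadingCoeff g * c) (hdeg : m.degree g ≤ m.degree f)
    (hne : f - monomial (m.degree f - m.degree g) c * g ≠ 0) :
    m.degree (f - monomial (m.degree f - m.degree g) c * g) ≺[m] m.degree f := by
  have hδ : m.degree f - m.degree g + m.degree g = m.degree f := tsub_add_cancel_of_le hdeg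
  refine toSyn_degree_lt_of_coeff_eq_zero hne ?_ ?_
  · have hmul : m.degree (monomial (m.degree f - m.degree g) c * g) ≼[m] m.degree f := by
      refine m.toSyn_degree_mul_le.trans ?_
      calc m.toSyn (m.degree (monomial (m.degree f - m.degree g) c)) + m.toSyn (m.degree g)
          ≤ m.toSyn (m.degree f - m.degree g) + m.toSyn (m.degree g) :=
            add_le_add_left (m.degree_monomial_le c) _
        _ = m.toSyn (m.degree f) := by rw [← map_add, hδ]
    exact m.degree_sub_le.trans (sup_le le_rfl hmul)
  · have hcoeff := coeff_monomial_mul (m.degree g) (m.degree f - m.degree g) c g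
    rw [hδ] at hcoeff
    rw [coeff_sub, hcoeff]
    change m.leadingCoeff f - c * m.leadingCoeff g = 0
    rw [hc, mul_comm, sub_self]

theorem exists_map_eq_map_leadingCoeff_ne_zero {φ : R →+* R₂} {I : Ideal (MvPolynomial σ R)}
    {Γ : Set (MvPolynomial σ R)} (hΓ : IsStrongGroebnerBasis m I Γ)
    (hlc : ∀ g ∈ Γ, φ (m.leadingCoeff g) ∈ nonZeroDivisors R₂)
    {f : MvPolynomial σ R} (hf : f ∈ I) (hf0 : map φ f ≠ 0) :
    ∃ f₀ ∈ I, map φ f₀ = map φ f ∧ φ (m.leadingCoeff f₀) ≠ 0 := by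
  induction hd : m.toSyn (m.degree f) using WellFoundedLT.induction generalizing f with
  | ind d ih =>
  by_cases hlcf : φ (m.leadingCoeff f) = 0
  swap
  · exact ⟨f, hf, rfl, hlcf⟩
  obtain ⟨g, hg, ⟨c, hc⟩, hdeg⟩ :=
    hΓ.exists_leadingCoeff_dvd hf fun h => hf0 (by rw [h, map_zero])
  have hc0 : φ c = 0 := (hlc g hg).2 (φ c) (by rw [mul_comm, ← map_mul, ← hc, hlcf])
  set h := f - monomial (m.degree f - m.degree g) c * g with hh
  have hmap : map φ h = map φ f := by simp [hh, hc0]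
  have hlt := toSyn_degree_sub_monomial_mul_lt hc hdeg fun h0 =>
    hf0 (by rw [← hmap, hh, h0, map_zero])
  obtain ⟨f₀, hf₀, hmap₀, hlc₀⟩ :=
    ih _ (hd ▸ hlt) (I.sub_mem hf (I.mul_mem_left _ (hΓ.1 hg).1)) (hmap ▸ hf0) rfl
  exact ⟨f₀, hf₀, hmap₀.trans hmap, hlc₀⟩

end MonomialOrder

open MonomialOrder in
theorem map_strong_groebner_basis_general
    {R₁ R₂ : Type*} [CommRing R₁] [CommRing R₂]
    (φ : R₁ →+* R₂) (hφ : Function.Surjective φ)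
    (n : ℕ) (m : MonomialOrder (Fin n))
    (I : Ideal (MvPolynomial (Fin n) R₁)) (Γ : Set (MvPolynomial (Fin n) R₁))
    (hΓ : IsStrongGroebnerBasis m I Γ)
    (hlc : ∀ g ∈ Γ, φ (mLeadingCoeff m g) ≠ 0 ∧
      φ (mLeadingCoeff m g) ∈ nonZeroDivisors R₂) :
    IsStrongGroebnerBasis m (Ideal.map (MvPolynomial.map φ) I)
      (MvPolynomial.map φ '' Γ) := by
  simp only [mLeadingCoeff_eq_leadingCoeff] at hlc
  refine ⟨?_, fun f' hf' hf'0 => ?_⟩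
  · rintro _ ⟨g, hg, rfl⟩
    exact ⟨Ideal.mem_map_of_mem _ (hΓ.1 hg).1,
      map_ne_zero_of_map_leadingCoeff_ne_zero (hlc g hg).1⟩
  obtain ⟨f, hf, rfl⟩ := (Ideal.mem_map_iff_of_surjective _ (map_surjective φ hφ)).1 hf'
  obtain ⟨f₀, hf₀, hmap, hlcf₀⟩ :=
    exists_map_eq_map_leadingCoeff_ne_zero hΓ (fun g hg => (hlc g hg).2) hf hf'0
  obtain ⟨g, hg, hdvd, hdeg⟩ :=
    hΓ.exists_leadingCoeff_dvd hf₀ fun h => hlcf₀ (by rw [h, leadingCoeff_zero, map_zero])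
  refine ⟨map φ g, ⟨g, hg, rfl⟩, ?_, ?_⟩
  · rw [← hmap, mLeadingCoeff_eq_leadingCoeff, mLeadingCoeff_eq_leadingCoeff,
      leadingCoeff_map_of_map_leadingCoeff_ne_zero (hlc g hg).1,
      leadingCoeff_map_of_map_leadingCoeff_ne_zero hlcf₀]
    exact map_dvd φ hdvd
  · rw [← hmap, mDegree_eq_degree, mDegree_eq_degree,
      degree_map_of_map_leadingCoeff_ne_zero (hlc g hg).1,
      degree_map_of_map_leadingCoeff_ne_zero hlcf₀]
    exact hdeg

/-- Proposition 2: if `φ : R₁ → R₂` is surjective and `Γ` is a strong Gröbner basis of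
`I ⊆ R₁[x₁,…,xₙ]` (`n ≥ 1`) such that `φ(lc(g))` is neither zero nor a zero divisor for all
`g ∈ Γ`, then `φ(Γ)` is a strong Gröbner basis of the image ideal `φ(I)`. -/
theorem map_strong_groebner_basis
    {R₁ R₂ : Type*} [CommRing R₁] [CommRing R₂]
    (φ : R₁ →+* R₂) (hφ : Function.Surjective φ)
    (n : ℕ) (hn : 1 ≤ n) (m : MonomialOrder (Fin n))
    (I : Ideal (MvPolynomial (Fin n) R₁)) (Γ : Set (MvPolynomial (Fin n) R₁))
    (hΓ : IsStrongGroebnerBasis m I Γ)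
    (hlc : ∀ g ∈ Γ, φ (mLeadingCoeff m g) ≠ 0 ∧
      φ (mLeadingCoeff m g) ∈ nonZeroDivisors R₂) :
    IsStrongGroebnerBasis m (Ideal.map (MvPolynomial.map φ) I)
      (MvPolynomial.map φ '' Γ) :=
  map_strong_groebner_basis_general φ hφ n m I Γ hΓ hlc
end

section
/- Let k be a field and f₁, f₂, Q₁, Q₂ ∈ k[x] univariate polynomials with Q₁f₁ + Q₂f₂ = 1. Then, in the polynomial ring k[x, z] in two variables, the ideal generated by {z·f₁, (1 − z)·f₂} equals the ideal generated by {f₁f₂, Q₂f₂ − z} (where polynomials in k[x] are viewed in k[x, z] via the canonical embedding). -/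
open MvPolynomial

/-- The canonical embedding `k[x] → k[x, z]` (with `x = X 0`, `z = X 1`). -/
noncomputable def emb (k : Type*) [CommSemiring k] :
    Polynomial k →ₐ[k] MvPolynomial (Fin 2) k :=
  Polynomial.aeval (X 0)

/-- In the proof of Proposition 4: if `Q₁f₁ + Q₂f₂ = 1` in `k[x]`, then in `k[x, z]` one has
`⟨z·f₁, (1 − z)·f₂⟩ = ⟨f₁f₂, Q₂f₂ − z⟩`. -/
theorem span_z_trick {k : Type*} [Field k]
    (f₁ f₂ Q₁ Q₂ : Polynomial k) (h : Q₁ * f₁ + Q₂ * f₂ = 1) :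
    Ideal.span {X 1 * emb k f₁, (1 - X 1) * emb k f₂} =
      Ideal.span {emb k (f₁ * f₂), emb k (Q₂ * f₂) - X 1} := by
  have H : emb k Q₁ * emb k f₁ + emb k Q₂ * emb k f₂ = 1 := by
    rw [← map_mul, ← map_mul, ← map_add, h, map_one]
  apply le_antisymm <;>
    rw [Ideal.span_le, Set.insert_subset_iff, Set.singleton_subset_iff] <;>
    constructor <;> rw [SetLike.mem_coe, Ideal.mem_span_pair]
  · exact ⟨emb k Q₂, -(emb k f₁), by simp only [map_mul]; ring⟩
  · exact ⟨emb k Q₁, emb k f₂, by simp only [map_mul]; linear_combination (emb k f₂) * H⟩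
  · exact ⟨emb k f₂, emb k f₁, by simp only [map_mul]; ring⟩
  · exact ⟨-(emb k Q₁), emb k Q₂, by
      simp only [map_mul]; linear_combination (-(X 1 : MvPolynomial (Fin 2) k)) * H⟩
end

section
/- Let k be a field, n ≥ 1, f₁, f₂, Q₂ ∈ k[x₁], and g₁,...,g_r ∈ k[x₁,...,xₙ]. Work in the polynomial ring k[x₁,...,xₙ, z] in n+1 variables, with k[x₁,...,xₙ] embedded canonically. Then the intersection of the ideal generated by {f₁f₂, Q₂f₂ − z, g₁,...,g_r} with the subring k[x₁,...,xₙ] (i.e. its preimage under the canonical embedding) equals the ideal of k[x₁,...,xₙ] generated by {f₁f₂, g₁,...,g_r}. -/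
open MvPolynomial

/-- The canonical embedding `k[x₁,…,xₙ] → k[x₁,…,xₙ,z]`, `xᵢ ↦ xᵢ`
(with `z` the last variable). -/
noncomputable def embZ (k : Type*) [CommSemiring k] (n : ℕ) :
    MvPolynomial (Fin (n + 1)) k →ₐ[k] MvPolynomial (Fin (n + 2)) k :=
  rename Fin.castSucc

/-- In the proof of Proposition 4: for `f₁, f₂, Q₂ ∈ k[x₁]` and `g₁,…,g_r ∈ k[x₁,…,xₙ]`
(here `n + 1 ≥ 1` variables), the intersection of the ideal
`⟨f₁f₂, Q₂f₂ − z, g₁,…,g_r⟩` of `k[x₁,…,xₙ,z]` with the subring `k[x₁,…,xₙ]` is the ideal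
`⟨f₁f₂, g₁,…,g_r⟩` of `k[x₁,…,xₙ]`. -/
theorem comap_span_z_trick {k : Type*} [Field k] (n : ℕ)
    (f₁ f₂ Q₂ : Polynomial k) (G : Finset (MvPolynomial (Fin (n + 1)) k)) :
    Ideal.comap (embZ k n)
      (Ideal.span
        (insert (embZ k n (univEmb k n (f₁ * f₂)))
          (insert (embZ k n (univEmb k n (Q₂ * f₂)) - X (Fin.last (n + 1)))
            (embZ k n '' (G : Set (MvPolynomial (Fin (n + 1)) k)))))) =
      Ideal.span (insert (univEmb k n (f₁ * f₂))
        (G : Set (MvPolynomial (Fin (n + 1)) k))) := by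
  set φ : MvPolynomial (Fin (n + 2)) k →ₐ[k] MvPolynomial (Fin (n + 1)) k :=
    aeval (Fin.lastCases (univEmb k n (Q₂ * f₂)) fun i => X i) with hφdef
  have hφ : ∀ p, φ (embZ k n p) = p := by
    intro p
    rw [hφdef, embZ]
    erw [aeval_rename]
    simp [Function.comp_def]
  apply le_antisymm
  · intro p hp
    have h1 : φ (embZ k n p) ∈ Ideal.map φ
        (Ideal.span
          (insert (embZ k n (univEmb k n (f₁ * f₂)))
            (insert (embZ k n (univEmb k n (Q₂ * f₂)) - X (Fin.last (n + 1)))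
              (embZ k n '' (G : Set (MvPolynomial (Fin (n + 1)) k)))))) :=
      Ideal.mem_map_of_mem _ hp
    rw [hφ] at h1
    rw [Ideal.map_span] at h1
    refine Ideal.span_le.mpr ?_ h1
    rintro q ⟨q', hq', rfl⟩
    rcases hq' with rfl | rfl | ⟨g, hg, rfl⟩
    · rw [hφ]
      exact Ideal.subset_span (Set.mem_insert _ _)
    · have : φ (X (Fin.last (n + 1))) = univEmb k n (Q₂ * f₂) := by
        simp [hφdef]
      simp only [map_sub, hφ, this, sub_self]
      exact Ideal.zero_mem _
    · rw [hφ]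
      exact Ideal.subset_span (Set.mem_insert_of_mem _ hg)
  · rw [Ideal.span_le]
    rintro q (rfl | hq)
    · exact Ideal.subset_span (Set.mem_insert _ _)
    · exact Ideal.subset_span
        (Set.mem_insert_of_mem _ (Set.mem_insert_of_mem _ ⟨q, hq, rfl⟩))
end
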